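/- Let q₁,…,q_r be distinct primes and let σ be a positive integer coprime to q₁⋯q_r. Define, for s ∈ ℂ away from poles, L(s) = ζ(s) · ∏_{i=1}^r (1−q_i^{−s}) · ∑_{f ∣ σ} f^{1−2s} · ∑_{k ∣ σ/f} μ(k)·k^{−s}. Then for every s ∈ ℂ with 0 < Re s < 1, L(s) = (σ²/π)^{1/2−s} · ∏_{i=1}^r (1−q_i^{−s})/(1−q_i^{s−1}) · (Γ((1−s)/2)/Γ(s/2)) · L(1−s). -/

import Mathlib

/-!
Write the divisor sum as the value at `σ` of the Dirichlet convolution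
`n^{1-2s} * (μ(n) n^{-s}) * 1`. Multiplying an arithmetic function pointwise by the completely
multiplicative `n^c` distributes over Dirichlet convolution, so `σ^{1-2s}` times the divisor sum at
`1 - s` is the convolution of the same three factors in another order. With the functional equation
`ζ(s) = π^{s-1/2} Γ((1-s)/2)/Γ(s/2) ζ(1-s)` and the splitting `(σ²/π)^{1/2-s} = σ^{1-2s} π^{s-1/2}`,
the Euler factors at the `q` are the only remaining discrepancy, and they are exactly the displayed
quotients.
-/

/-- The partial Zagier `L`-function at a square discriminant `σ²`:
`L(s) = ζ(s) · ∏_{q ∈ Q}(1-q^{-s}) · ∑_{f ∣ σ} f^{1-2s} ∑_{k ∣ σ/f} μ(k)k^{-s}`. -/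
noncomputable def Lfun (Q : Finset ℕ) (σ : ℕ) (s : ℂ) : ℂ :=
  riemannZeta s * (∏ q ∈ Q, (1 - (q : ℂ) ^ (-s))) *
    ∑ f ∈ σ.divisors, (f : ℂ) ^ (1 - 2 * s) *
      ∑ k ∈ (σ / f).divisors, ((ArithmeticFunction.moebius k : ℤ) : ℂ) * (k : ℂ) ^ (-s)

open scoped ArithmeticFunction.zeta ArithmeticFunction.Moebius

namespace ArithmeticFunction

noncomputable def cpow (c : ℂ) : ArithmeticFunction ℂ :=
  ⟨fun n => if n = 0 then 0 else (n : ℂ) ^ c, if_pos rfl⟩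

variable {c d : ℂ}

theorem cpow_apply {n : ℕ} (hn : n ≠ 0) : cpow c n = (n : ℂ) ^ c := if_neg hn

theorem cpow_zero : cpow 0 = ζ := by
  ext n
  rcases eq_or_ne n 0 with rfl | hn
  · simp
  · simp [cpow_apply hn, hn]

theorem pmul_cpow_cpow : (cpow c).pmul (cpow d) = cpow (c + d) := by
  ext n
  rcases eq_or_ne n 0 with rfl | hn
  · simp
  · simp only [pmul_apply, cpow_apply hn, Complex.cpow_add _ _ (Nat.cast_ne_zero.mpr hn)]

theorem cpow_pmul_mul (f g : ArithmeticFunction ℂ) :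
    (cpow c).pmul (f * g) = (cpow c).pmul f * (cpow c).pmul g := by
  ext n
  simp only [pmul_apply, mul_apply, Finset.mul_sum]
  refine Finset.sum_congr rfl fun x hx => ?_
  obtain ⟨rfl, hn⟩ := Nat.mem_divisorsAntidiagonal.mp hx
  rw [cpow_apply hn, cpow_apply (left_ne_zero_of_mul hn), cpow_apply (right_ne_zero_of_mul hn),
    Nat.cast_mul, Complex.natCast_mul_natCast_cpow]
  ring

end ArithmeticFunction

open ArithmeticFunction

noncomputable def zagierDivisorSum (s : ℂ) : ArithmeticFunction ℂ :=
  cpow (1 - 2 * s) * ((cpow (-s)).pmul μ * ζ)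

theorem Lfun_eq (Q : Finset ℕ) (σ : ℕ) (s : ℂ) :
    Lfun Q σ s = riemannZeta s * (∏ q ∈ Q, (1 - (q : ℂ) ^ (-s))) * zagierDivisorSum s σ := by
  rw [Lfun, zagierDivisorSum, mul_apply,
    Nat.sum_divisorsAntidiagonal fun f g => cpow (1 - 2 * s) f * ((cpow (-s)).pmul μ * ζ) g]
  congr 1
  refine Finset.sum_congr rfl fun f hf => ?_
  rw [cpow_apply (Nat.ne_of_gt (Nat.pos_of_mem_divisors hf)), coe_mul_zeta_apply]
  refine congrArg _ (Finset.sum_congr rfl fun k hk => ?_)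
  rw [pmul_apply, cpow_apply (Nat.ne_of_gt (Nat.pos_of_mem_divisors hk)), intCoe_apply, mul_comm]

/-- At `1 - s` the three convolution factors are `n ^ (2s - 1)`, `μ(n) n ^ (s - 1)` and `1`;
twisting by `n ^ (1 - 2s)` turns them into `1`, `μ(n) n ^ (-s)` and `n ^ (1 - 2s)`. -/
theorem cpow_pmul_zagierDivisorSum_one_sub (s : ℂ) :
    (cpow (1 - 2 * s)).pmul (zagierDivisorSum (1 - s)) = zagierDivisorSum s := by
  rw [zagierDivisorSum, zagierDivisorSum, cpow_pmul_mul, cpow_pmul_mul, ← pmul_assoc,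
    pmul_cpow_cpow, pmul_cpow_cpow, pmul_zeta, show 1 - 2 * s + -(1 - s) = -s by ring,
    show 1 - 2 * s + (1 - 2 * (1 - s)) = 0 by ring, cpow_zero]
  ring

theorem Complex.ofReal_sq_div_pi_cpow {x : ℝ} (hx : 0 ≤ x) (s : ℂ) :
    ((x : ℂ) ^ 2 / (Real.pi : ℂ)) ^ ((1 : ℂ) / 2 - s)
      = (x : ℂ) ^ (1 - 2 * s) * (Real.pi : ℂ) ^ (s - 1 / 2) := by
  have hsplit : (x : ℂ) ^ 2 / (Real.pi : ℂ) = ((x ^ 2 : ℝ) : ℂ) * ((Real.pi⁻¹ : ℝ) : ℂ) := by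
    push_cast; ring
  rw [hsplit, Complex.mul_cpow_ofReal_nonneg (by positivity) (by positivity)]
  congr 1
  · rw [Complex.ofReal_pow, ← Complex.cpow_ofNat, ← Complex.cpow_mul]
    · ring_nf
    all_goals simp [← Complex.ofReal_log hx, Real.pi_pos.le, Real.pi_pos]
  · rw [Complex.ofReal_inv, Complex.inv_cpow _ _ ?_, ← Complex.cpow_neg]
    · ring_nf
    rw [Complex.arg_ofReal_of_nonneg Real.pi_pos.le]
    exact Real.pi_ne_zero.symm

theorem Complex.one_sub_natCast_cpow_ne_zero {q : ℕ} (hq : 1 < q) {z : ℂ} (hz : z.re < 0) :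
    1 - (q : ℂ) ^ z ≠ 0 := by
  have hnorm : ‖(q : ℂ) ^ z‖ < 1 := by
    rw [Complex.norm_natCast_cpow_of_pos (by omega)]
    exact Real.rpow_lt_one_of_one_lt_of_neg (by exact_mod_cast hq) hz
  intro h
  rw [← eq_of_sub_eq_zero h, norm_one] at hnorm
  exact lt_irrefl _ hnorm

theorem riemannZeta_eq_mul_riemannZeta_one_sub {s : ℂ} (hs0 : 0 < s.re) (hs1 : s.re < 1) :
    riemannZeta s = (Real.pi : ℂ) ^ (s - 1 / 2) *
      (Complex.Gamma ((1 - s) / 2) / Complex.Gamma (s / 2)) * riemannZeta (1 - s) := by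
  have hs : s ≠ 0 := fun h => by simp [h] at hs0
  have h1s_re : 0 < (1 - s).re := by simpa using hs1
  have h1s : 1 - s ≠ 0 := fun h => by simp [h] at h1s_re
  have hratio : Complex.Gammaℝ (1 - s) / Complex.Gammaℝ s
      = (Real.pi : ℂ) ^ (s - 1 / 2) * (Complex.Gamma ((1 - s) / 2) / Complex.Gamma (s / 2)) := by
    rw [Complex.Gammaℝ_def, Complex.Gammaℝ_def, show s - 1 / 2 = -(1 - s) / 2 - -s / 2 by ring,
      Complex.cpow_sub _ _ (Complex.ofReal_ne_zero.mpr Real.pi_ne_zero)]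
    field_simp
  have hG1 := Complex.Gammaℝ_ne_zero_of_re_pos hs0
  have hG2 := Complex.Gammaℝ_ne_zero_of_re_pos h1s_re
  rw [riemannZeta_def_of_ne_zero hs, riemannZeta_def_of_ne_zero h1s,
    completedRiemannZeta_one_sub, ← hratio]
  field_simp

theorem prod_one_sub_natCast_cpow_neg_eq {Q : Finset ℕ} (hQ : ∀ q ∈ Q, 1 < q) {s : ℂ}
    (hs1 : s.re < 1) :
    ∏ q ∈ Q, (1 - (q : ℂ) ^ (-s))
      = (∏ q ∈ Q, (1 - (q : ℂ) ^ (-s)) / (1 - (q : ℂ) ^ (s - 1)))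
        * ∏ q ∈ Q, (1 - (q : ℂ) ^ (-(1 - s))) := by
  rw [← Finset.prod_mul_distrib]
  refine Finset.prod_congr rfl fun q hq => ?_
  rw [neg_sub, div_mul_cancel₀ _
    (Complex.one_sub_natCast_cpow_ne_zero (hQ q hq) (by simpa using hs1))]

theorem stmt19_general (Q : Finset ℕ) (hQ : ∀ q ∈ Q, q.Prime)
    (σ : ℕ) (hσ : 0 < σ)
    (s : ℂ) (hs0 : 0 < s.re) (hs1 : s.re < 1) :
    Lfun Q σ s =
      (((σ : ℂ) ^ 2 / (Real.pi : ℂ)) ^ ((1 : ℂ) / 2 - s)) *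
        (∏ q ∈ Q, (1 - (q : ℂ) ^ (-s)) / (1 - (q : ℂ) ^ (s - 1))) *
        (Complex.Gamma ((1 - s) / 2) / Complex.Gamma (s / 2)) *
        Lfun Q σ (1 - s) := by
  rw [Lfun_eq, Lfun_eq, ← cpow_pmul_zagierDivisorSum_one_sub, pmul_apply, cpow_apply hσ.ne',
    riemannZeta_eq_mul_riemannZeta_one_sub hs0 hs1,
    prod_one_sub_natCast_cpow_neg_eq (fun q hq => (hQ q hq).one_lt) hs1,
    ← Complex.ofReal_natCast σ, Complex.ofReal_sq_div_pi_cpow σ.cast_nonneg]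
  ring

/-- Functional equation of the partial Zagier `L`-function at a square
discriminant: for distinct primes `q₁,…,q_r` (a finset `Q`), a positive
integer `σ` coprime to `∏ q`, and `0 < Re s < 1`,
`L(s) = (σ²/π)^{1/2-s} · ∏_q (1-q^{-s})/(1-q^{s-1}) · Γ((1-s)/2)/Γ(s/2) · L(1-s)`. -/
theorem stmt19 (Q : Finset ℕ) (hQ : ∀ q ∈ Q, q.Prime)
    (σ : ℕ) (hσ : 0 < σ) (hcop : Nat.Coprime σ (∏ q ∈ Q, q))
    (s : ℂ) (hs0 : 0 < s.re) (hs1 : s.re < 1) :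
    Lfun Q σ s =
      (((σ : ℂ) ^ 2 / (Real.pi : ℂ)) ^ ((1 : ℂ) / 2 - s)) *
        (∏ q ∈ Q, (1 - (q : ℂ) ^ (-s)) / (1 - (q : ℂ) ^ (s - 1))) *
        (Complex.Gamma ((1 - s) / 2) / Complex.Gamma (s / 2)) *
        Lfun Q σ (1 - s) :=
  stmt19_general Q hQ σ hσ s hs0 hs1
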